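/- For the Landau-Zener Hamiltonian, the derivative of the eigenprojections satisfies dP_s^±/ds = ±(g/(8 e_s²))(E_s + E_s*), where E_s is the matrix (1/(4e_s))[[g, -s-2e_s],[-s+2e_s, -g]]. -/

import Mathlib

open Matrix

/-- The half-gap `e_s = (1/2)√(s² + g²)`. -/
noncomputable def eLZ (g s : ℝ) : ℝ := (1/2) * Real.sqrt (s^2 + g^2)

/-- The Landau-Zener Hamiltonian `H_s = (1/2)[[s, g],[g, -s]]`. -/
noncomputable def HLZ (g s : ℝ) : Matrix (Fin 2) (Fin 2) ℂ :=
  (1/2 : ℂ) • !![(s : ℂ), (g : ℂ); (g : ℂ), -(s : ℂ)]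

/-- The eigenprojection `P_s⁺` of `H_s` for the eigenvalue `+e_s`. -/
noncomputable def PpLZ (g s : ℝ) : Matrix (Fin 2) (Fin 2) ℂ :=
  (1/2 : ℂ) • (1 + ((eLZ g s : ℝ) : ℂ)⁻¹ • HLZ g s)

/-- The eigenprojection `P_s⁻` of `H_s` for the eigenvalue `-e_s`. -/
noncomputable def PmLZ (g s : ℝ) : Matrix (Fin 2) (Fin 2) ℂ :=
  (1/2 : ℂ) • (1 - ((eLZ g s : ℝ) : ℂ)⁻¹ • HLZ g s)

/-- The (real) coherence `E_s = (1/(4e_s))[[g, -s-2e_s],[-s+2e_s, -g]]`. -/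
noncomputable def ELZ (g s : ℝ) : Matrix (Fin 2) (Fin 2) ℂ :=
  ((4 * eLZ g s : ℝ) : ℂ)⁻¹ •
    !![(g : ℂ), ((-s - 2 * eLZ g s : ℝ) : ℂ); ((-s + 2 * eLZ g s : ℝ) : ℂ), -(g : ℂ)]

attribute [local instance] Matrix.normedAddCommGroup Matrix.normedSpace

/-!
With `σ_z = !![1, 0; 0, -1]` and `σ_x = !![0, 1; 1, 0]` we have
`P_s⁺ = 1/2 + (s σ_z + g σ_x) / (4 e_s)` and `P_s⁻ = 1 - P_s⁺`. Differentiating the two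
coefficients with `e_s' = s / (4 e_s)` and `4 e_s² = s² + g²` gives
`dP_s⁺/ds = g (g σ_z - s σ_x) / (16 e_s³)`, while `E_s + E_s* = (g σ_z - s σ_x) / (2 e_s)`.
-/

def pauliZ : Matrix (Fin 2) (Fin 2) ℂ := !![1, 0; 0, -1]

def pauliX : Matrix (Fin 2) (Fin 2) ℂ := !![0, 1; 1, 0]

lemma sq_eLZ (g s : ℝ) : 4 * eLZ g s ^ 2 = s ^ 2 + g ^ 2 := by
  rw [eLZ, mul_pow, Real.sq_sqrt (by positivity)]
  ring

lemma eLZ_pos {g : ℝ} (hg : g ≠ 0) (s : ℝ) : 0 < eLZ g s := by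
  unfold eLZ
  have : 0 < s ^ 2 + g ^ 2 := by positivity
  positivity

lemma hasDerivAt_eLZ {g : ℝ} (hg : g ≠ 0) (s : ℝ) :
    HasDerivAt (eLZ g) (s / (4 * eLZ g s)) s := by
  have hpos : 0 < s ^ 2 + g ^ 2 := by positivity
  have hsqrt : HasDerivAt (fun t : ℝ => Real.sqrt (t ^ 2 + g ^ 2))
      (2 * s / (2 * Real.sqrt (s ^ 2 + g ^ 2))) s := by
    simpa using ((hasDerivAt_pow 2 s).add_const (g ^ 2)).sqrt hpos.ne'
  refine (hsqrt.const_mul (1 / 2 : ℝ)).congr_deriv ?_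
  have : Real.sqrt (s ^ 2 + g ^ 2) ≠ 0 := by positivity
  rw [eLZ]
  field_simp
  ring

lemma PpLZ_eq_pauli (g t : ℝ) :
    PpLZ g t = (1 / 2 : ℂ) • 1 + ((t / (4 * eLZ g t) : ℝ) : ℂ) • pauliZ
      + ((g / (4 * eLZ g t) : ℝ) : ℂ) • pauliX := by
  ext i j
  fin_cases i <;> fin_cases j <;> simp [PpLZ, HLZ, pauliZ, pauliX] <;> ring

lemma PmLZ_eq_one_sub_PpLZ (g t : ℝ) : PmLZ g t = 1 - PpLZ g t := by
  simp only [PmLZ, PpLZ, smul_add, smul_sub]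
  module

lemma ELZ_add_conjTranspose (g s : ℝ) :
    ELZ g s + (ELZ g s)ᴴ = (((2 * eLZ g s)⁻¹ : ℝ) : ℂ) • ((g : ℂ) • pauliZ - (s : ℂ) • pauliX) := by
  ext i j
  fin_cases i <;> fin_cases j <;> simp [ELZ, pauliZ, pauliX] <;> ring

lemma hasDerivAt_div_four_eLZ {g : ℝ} (hg : g ≠ 0) (s : ℝ) :
    HasDerivAt (fun t => t / (4 * eLZ g t)) (g ^ 2 / (16 * eLZ g s ^ 3)) s := by
  have he := (eLZ_pos hg s).ne'
  refine ((hasDerivAt_id' s).div ((hasDerivAt_eLZ hg s).const_mul 4) (by positivity)).congr_deriv ?_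
  field_simp
  linear_combination 16 * sq_eLZ g s

lemma hasDerivAt_const_div_four_eLZ {g : ℝ} (hg : g ≠ 0) (s : ℝ) :
    HasDerivAt (fun t => g / (4 * eLZ g t)) (-(g * s) / (16 * eLZ g s ^ 3)) s := by
  have he := (eLZ_pos hg s).ne'
  refine ((hasDerivAt_const s g).div ((hasDerivAt_eLZ hg s).const_mul 4) (by positivity)).congr_deriv ?_
  field_simp
  ring

lemma hasDerivAt_PpLZ {g : ℝ} (hg : g ≠ 0) (s : ℝ) :
    HasDerivAt (PpLZ g)
      (((g / (16 * eLZ g s ^ 3) : ℝ) : ℂ) • ((g : ℂ) • pauliZ - (s : ℂ) • pauliX)) s := by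
  rw [funext (PpLZ_eq_pauli g)]
  refine (((hasDerivAt_const s _).add
    ((hasDerivAt_div_four_eLZ hg s).ofReal_comp.smul_const pauliZ)).add
    ((hasDerivAt_const_div_four_eLZ hg s).ofReal_comp.smul_const pauliX)).congr_deriv ?_
  rw [zero_add, smul_sub, smul_smul, smul_smul, sub_eq_add_neg, ← neg_smul]
  congr 2 <;> push_cast <;> ring

/-- `dP_s^±/ds = ±(g/(8 e_s²))(E_s + E_s*)`. -/
theorem deriv_eigenprojections (g s : ℝ) (hg : 0 < g) :
    HasDerivAt (fun t : ℝ => PpLZ g t)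
      (((g / (8 * (eLZ g s)^2) : ℝ) : ℂ) • (ELZ g s + (ELZ g s)ᴴ)) s ∧
    HasDerivAt (fun t : ℝ => PmLZ g t)
      (-(((g / (8 * (eLZ g s)^2) : ℝ) : ℂ) • (ELZ g s + (ELZ g s)ᴴ))) s := by
  have he := (eLZ_pos hg.ne' s).ne'
  have hderiv : ((g / (8 * eLZ g s ^ 2) : ℝ) : ℂ) • (ELZ g s + (ELZ g s)ᴴ)
      = ((g / (16 * eLZ g s ^ 3) : ℝ) : ℂ) • ((g : ℂ) • pauliZ - (s : ℂ) • pauliX) := by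
    rw [ELZ_add_conjTranspose, smul_smul, ← Complex.ofReal_mul]
    congr 2
    field_simp
    ring
  have hP := hderiv ▸ hasDerivAt_PpLZ hg.ne' s
  refine ⟨hP, ?_⟩
  simp_rw [PmLZ_eq_one_sub_PpLZ]
  exact hP.const_sub 1
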